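/- Suffix property: for every CF program p and input x ∈ {0,1}*, every judgment p, ρ ⊢ e → v occurring in the computation tree T^{p,x} satisfies v ∈ V_x and ρ(z) ∈ V_x for every variable z in the domain of ρ, where V_x = {0,1} ∪ suffixes(x). -/

import Mathlib

/-! # Cons-free programs (CF / CFTR / CFpoly / NCF) and Turing-machine complexity classes -/

/-- Values: booleans and bit strings. -/
inductive Val : Type
  | bool : Bool → Val
  | str  : List Bool → Val
deriving DecidableEq, Inhabited

/-- Base operations of cons-free programs. -/
inductive BOp : Type
  | not | null | head | tail
deriving DecidableEq, Inhabited

/-- Expressions.  `amb` is the nondeterministic choice construct of NCF;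
CF programs are exactly the choice-free programs. -/
inductive Exp : Type
  | tt   : Exp
  | ff   : Exp
  | nil  : Exp
  | var  : Nat → Exp
  | base : BOp → Exp → Exp
  | ite  : Exp → Exp → Exp → Exp
  | call : Nat → List Exp → Exp
  | amb  : Exp → Exp → Exp
deriving Inhabited

/-- A function definition `f x1 ... xm = e`: arity `m` and body `e`
(variables are de Bruijn-style indices into the argument list). -/
structure Defn where
  arity : Nat
  body  : Exp
deriving Inhabited

/-- A program is a finite list of function definitions; the first one is the entry point. -/
abbrev Prog := List Defn

/-- Body of the entry (first) function. -/
def Prog.entry (p : Prog) : Exp := p.headI.body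

/-- Semantics of the base functions (partial). -/
def evalBase : BOp → Val → Option Val
  | .not,  .bool b       => some (.bool (!b))
  | .null, .str s        => some (.bool s.isEmpty)
  | .head, .str (b :: _) => some (.bool b)
  | .tail, .str (_ :: s) => some (.str s)
  | _,     _             => none

/- Call-by-value big-step semantics.  `EvalH p ρ e v n h` means: in environment `ρ`
the expression `e` evaluates to `v`, by a computation (proof) tree with `n` nodes
whose call history (the sequence of configurations `(f, arguments)` of calls to
program-defined functions, in evaluation order) is `h`. -/
mutual
inductive EvalH (p : Prog) : List Val → Exp → Val → Nat → List (Nat × List Val) → Prop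
  | tt  {ρ} : EvalH p ρ .tt (.bool true) 1 []
  | ff  {ρ} : EvalH p ρ .ff (.bool false) 1 []
  | nil {ρ} : EvalH p ρ .nil (.str []) 1 []
  | var {ρ : List Val} {i : Nat} {v} : ρ[i]? = some v → EvalH p ρ (.var i) v 1 []
  | base {ρ op e v w n h} :
      EvalH p ρ e v n h → evalBase op v = some w →
      EvalH p ρ (.base op e) w (n + 1) h
  | iteT {ρ e0 e1 e2 v n0 n1 h0 h1} :
      EvalH p ρ e0 (.bool true) n0 h0 → EvalH p ρ e1 v n1 h1 →
      EvalH p ρ (.ite e0 e1 e2) v (n0 + n1 + 1) (h0 ++ h1)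
  | iteF {ρ e0 e1 e2 v n0 n2 h0 h2} :
      EvalH p ρ e0 (.bool false) n0 h0 → EvalH p ρ e2 v n2 h2 →
      EvalH p ρ (.ite e0 e1 e2) v (n0 + n2 + 1) (h0 ++ h2)
  | ambL {ρ e1 e2 v n h} :
      EvalH p ρ e1 v n h → EvalH p ρ (.amb e1 e2) v (n + 1) h
  | ambR {ρ e1 e2 v n h} :
      EvalH p ρ e2 v n h → EvalH p ρ (.amb e1 e2) v (n + 1) h
  | call {ρ : List Val} {f : Nat} {es ws d v m n hs h} :
      p[f]? = some d → EvalArgsH p ρ es ws m hs → ws.length = d.arity →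
      EvalH p ws d.body v n h →
      EvalH p ρ (.call f es) v (m + n + 1) (hs ++ (f, ws) :: h)

inductive EvalArgsH (p : Prog) : List Val → List Exp → List Val → Nat → List (Nat × List Val) → Prop
  | nil {ρ} : EvalArgsH p ρ [] [] 0 []
  | cons {ρ e es v vs n m h hs} :
      EvalH p ρ e v n h → EvalArgsH p ρ es vs m hs →
      EvalArgsH p ρ (e :: es) (v :: vs) (n + m) (h ++ hs)
end

/-- `p, ρ ⊢ e → v`. -/
def Eval (p : Prog) (ρ : List Val) (e : Exp) (v : Val) : Prop := ∃ n h, EvalH p ρ e v n h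

/-- Pointwise evaluation of a list of expressions. -/
def EvalList (p : Prog) (ρ : List Val) (es : List Exp) (ws : List Val) : Prop :=
  List.Forall₂ (Eval p ρ) es ws

/-- `⟦p⟧(x) = v` with computation-tree size `n` and call history `h`. -/
def RunH (p : Prog) (x : List Bool) (v : Val) (n : Nat) (h : List (Nat × List Val)) : Prop :=
  EvalH p [Val.str x] p.entry v n h

/-- `⟦p⟧(x) = v`. -/
def Run (p : Prog) (x : List Bool) (v : Val) : Prop := ∃ n h, RunH p x v n h

/-- `time_p(x) = n`: the computation tree `T^{p,x}` has `n` nodes. -/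
def TimeIs (p : Prog) (x : List Bool) (n : Nat) : Prop := ∃ v h, RunH p x v n h

/-- Deterministic decision: `p` terminates on every input, answering `True` exactly on `X`. -/
def Decides (p : Prog) (X : Set (List Bool)) : Prop :=
  ∀ x : List Bool, (x ∈ X ∧ Run p x (.bool true)) ∨ (x ∉ X ∧ Run p x (.bool false))

/-- Nondeterministic decision: `x ∈ X` iff some computation `⟦p⟧(x) ⇝ True` exists. -/
def NDecides (p : Prog) (X : Set (List Bool)) : Prop :=
  ∀ x : List Bool, x ∈ X ↔ Run p x (.bool true)

/-- `Reach_p(x)`: configurations `(f, ρ)` called at least once in some computation of `p` on `x`. -/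
def Reach (p : Prog) (x : List Bool) : Set (Nat × List Val) :=
  {c | ∃ v n h, RunH p x v n h ∧ c ∈ h}

/-- `V_x = {0,1} ∪ suffixes(x)`: the range of variation on input `x`. -/
def Vx (x : List Bool) : Set Val :=
  {v | (∃ b, v = .bool b) ∨ ∃ s, v = .str s ∧ s <:+ x}

/-- An expression is choice-free (belongs to the CF fragment). -/
inductive NoChoice : Exp → Prop
  | tt : NoChoice .tt
  | ff : NoChoice .ff
  | nil : NoChoice .nil
  | var (i) : NoChoice (.var i)
  | base (op) {e} : NoChoice e → NoChoice (.base op e)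
  | ite {a b c} : NoChoice a → NoChoice b → NoChoice c → NoChoice (.ite a b c)
  | call (f) {es} : (∀ e ∈ es, NoChoice e) → NoChoice (.call f es)

/-- A CF program: a cons-free program with no nondeterministic choice. -/
def CFProg (p : Prog) : Prop := ∀ d ∈ p, NoChoice d.body

/-- Does the expression contain a call to a program-defined function? -/
def hasCall : Exp → Bool
  | .base _ e => hasCall e
  | .ite a b c => hasCall a || hasCall b || hasCall c
  | .call _ _ => true
  | .amb a b => hasCall a || hasCall b
  | _ => false

/-- The classification map `α` with `X = 0 < T = 1 < N = 2`:
`α e = 0` if `e` has no calls; `α e = 1` if all calls in `e` are in tail position;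
`α e = 2` otherwise. -/
def alpha : Exp → Nat
  | .base _ e => if hasCall e then 2 else 0
  | .ite a b c => if hasCall a then 2 else max (alpha b) (alpha c)
  | .call _ es => if es.all (fun e => !hasCall e) then 1 else 2
  | .amb a b => max (alpha a) (alpha b)
  | _ => 0

/-- All calls in every definition body are in tail position (`α(e^f) ∈ {X, T}`). -/
def TRProg (p : Prog) : Prop := ∀ d ∈ p, alpha d.body ≤ 1

/-- A CFTR program: a tail-recursive cons-free program. -/
def CFTRProg (p : Prog) : Prop := CFProg p ∧ TRProg p

/-- Every call in the program is a tail call or a linear call, i.e. no call to a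
defined function is nested inside the argument of another call. -/
def linearOnly : Exp → Bool
  | .base _ e => linearOnly e
  | .ite a b c => linearOnly a && linearOnly b && linearOnly c
  | .call _ es => es.all (fun e => !hasCall e)
  | .amb a b => linearOnly a && linearOnly b
  | _ => true

/-- A CFpoly program: a CF program that terminates on all inputs, in polynomial native time. -/
def CFpolyProg (p : Prog) : Prop :=
  CFProg p ∧ (∀ x, ∃ v, Run p x v) ∧
    ∃ π : Polynomial ℕ, ∀ x n, TimeIs p x n → n ≤ π.eval x.length

/-- A judgment `p, ρ ⊢ e → v` occurs in the computation tree `T^{p,x}`. -/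
inductive Occurs (p : Prog) (x : List Bool) : List Val → Exp → Val → Prop
  | root {v} : Eval p [Val.str x] p.entry v → Occurs p x [Val.str x] p.entry v
  | base {ρ op e v w} : Occurs p x ρ (.base op e) v → Eval p ρ e w → Occurs p x ρ e w
  | iteTest {ρ a b c v w} : Occurs p x ρ (.ite a b c) v → Eval p ρ a w → Occurs p x ρ a w
  | iteT {ρ a b c v} : Occurs p x ρ (.ite a b c) v → Eval p ρ a (.bool true) →
      Eval p ρ b v → Occurs p x ρ b v
  | iteF {ρ a b c v} : Occurs p x ρ (.ite a b c) v → Eval p ρ a (.bool false) →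
      Eval p ρ c v → Occurs p x ρ c v
  | ambL {ρ a b v} : Occurs p x ρ (.amb a b) v → Eval p ρ a v → Occurs p x ρ a v
  | ambR {ρ a b v} : Occurs p x ρ (.amb a b) v → Eval p ρ b v → Occurs p x ρ b v
  | arg {ρ f es v e w} : Occurs p x ρ (.call f es) v → e ∈ es → Eval p ρ e w → Occurs p x ρ e w
  | body {ρ f es ws d v} : Occurs p x ρ (.call f es) v → p[f]? = some d →
      EvalList p ρ es ws → Eval p ws d.body v → Occurs p x ws d.body v

/- The deterministic left-to-right bottom-up evaluator, with fuel bounding call depth. -/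
mutual
def evalFuel (p : Prog) : Nat → List Val → Exp → Option Val
  | _, _, .tt => some (.bool true)
  | _, _, .ff => some (.bool false)
  | _, _, .nil => some (.str [])
  | _, ρ, .var i => ρ[i]?
  | k, ρ, .base op e => (evalFuel p k ρ e).bind (evalBase op)
  | k, ρ, .ite a b c =>
      match evalFuel p k ρ a with
      | some (.bool true) => evalFuel p k ρ b
      | some (.bool false) => evalFuel p k ρ c
      | _ => none
  | _, _, .amb _ _ => none
  | k, ρ, .call f es =>
      match evalArgsFuel p k ρ es with
      | some ws =>
          match k, p[f]? with
          | k' + 1, some d => if ws.length = d.arity then evalFuel p k' ws d.body else none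
          | _, _ => none
      | none => none
termination_by k _ e => (k, sizeOf e)
decreasing_by
  all_goals first
    | decreasing_tactic
    | (simp only [wfParam] at *; apply Prod.Lex.left; omega)
    | (simp only [wfParam] at *; decreasing_tactic)

def evalArgsFuel (p : Prog) : Nat → List Val → List Exp → Option (List Val)
  | _, _, [] => some []
  | k, ρ, e :: es =>
      match evalFuel p k ρ e, evalArgsFuel p k ρ es with
      | some v, some vs => some (v :: vs)
      | _, _ => none
termination_by k _ es => (k, sizeOf es)
end

/-! ## Turing machines -/

/-- Head moves. -/
inductive Dir : Type
  | L | S | R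
deriving DecidableEq, Inhabited

def Dir.z : Dir → ℤ
  | .L => -1
  | .S => 0
  | .R => 1

/-- A configuration: control state, input-head position, work-head position, work tape. -/
structure Cfg (Q : Type) where
  q : Q
  ipos : ℤ
  wpos : ℤ
  tape : ℤ → Option Bool

/-- The symbol of the read-only input tape at position `i` (blank outside the input). -/
def inputSym (x : List Bool) (i : ℤ) : Option Bool :=
  if 0 ≤ i then x[i.toNat]? else none

/-- A deterministic Turing machine with a read-only input tape and a read-write work tape. -/
structure TM where
  Q : Type
  [fin : Fintype Q]
  [deq : DecidableEq Q]
  δ : Q → Option Bool → Option Bool → Q × Option Bool × Dir × Dir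
  start : Q
  accept : Q
  reject : Q

attribute [instance] TM.fin TM.deq

def TM.init (M : TM) : Cfg M.Q := ⟨M.start, 0, 0, fun _ => none⟩

/-- One deterministic step (the accepting and rejecting states are halting). -/
def TM.step (M : TM) (x : List Bool) (c : Cfg M.Q) : Cfg M.Q :=
  if c.q = M.accept ∨ c.q = M.reject then c
  else
    let r := M.δ c.q (inputSym x c.ipos) (c.tape c.wpos)
    ⟨r.1, c.ipos + r.2.2.1.z, c.wpos + r.2.2.2.z,
      fun j => if j = c.wpos then r.2.1 else c.tape j⟩

/-- Configuration after `t` steps on input `x`. -/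
def TM.conf (M : TM) (x : List Bool) (t : Nat) : Cfg M.Q := (M.step x)^[t] M.init

/-- `M` decides `X`: reaches `accept` on members, `reject` on non-members. -/
def TM.DecidesTM (M : TM) (X : Set (List Bool)) : Prop :=
  ∀ x : List Bool,
    (x ∈ X → ∃ t, (M.conf x t).q = M.accept) ∧ (x ∉ X → ∃ t, (M.conf x t).q = M.reject)

/-- The work head of `M` stays within `s` cells of the origin on input `x`. -/
def TM.SpaceBound (M : TM) (x : List Bool) (s : Nat) : Prop :=
  ∀ t, ((M.conf x t).wpos).natAbs ≤ s

/-- `M` halts within `T` steps on input `x`. -/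
def TM.HaltsIn (M : TM) (x : List Bool) (T : Nat) : Prop :=
  ∃ t ≤ T, (M.conf x t).q = M.accept ∨ (M.conf x t).q = M.reject

/-- LOGSPACE: decidable by a deterministic TM in `O(log n)` work space. -/
def LOGSPACE : Set (Set (List Bool)) :=
  {X | ∃ M : TM, M.DecidesTM X ∧
        ∃ C : Nat, ∀ x, M.SpaceBound x (C * (Nat.log 2 x.length + 1))}

/-- PTIME: decidable by a deterministic TM in time `O(n^k)` for some `k`. -/
def PTIME : Set (Set (List Bool)) :=
  {X | ∃ M : TM, M.DecidesTM X ∧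
        ∃ C k : Nat, ∀ x, M.HaltsIn x (C * (x.length + 1) ^ k)}

/-- A nondeterministic Turing machine (read-only input tape, read-write work tape). -/
structure NTM where
  Q : Type
  [fin : Fintype Q]
  δ : Q → Option Bool → Option Bool → Finset (Q × Option Bool × Dir × Dir)
  start : Q
  accept : Q

attribute [instance] NTM.fin

def NTM.init (M : NTM) : Cfg M.Q := ⟨M.start, 0, 0, fun _ => none⟩

/-- One nondeterministic step. -/
def NTM.Step (M : NTM) (x : List Bool) (c c' : Cfg M.Q) : Prop :=
  ∃ r ∈ M.δ c.q (inputSym x c.ipos) (c.tape c.wpos),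
    c' = ⟨r.1, c.ipos + r.2.2.1.z, c.wpos + r.2.2.2.z,
          fun j => if j = c.wpos then r.2.1 else c.tape j⟩

/-- A step staying within work space `s`. -/
def NTM.StepB (M : NTM) (x : List Bool) (s : Nat) (c c' : Cfg M.Q) : Prop :=
  M.Step x c c' ∧ c'.wpos.natAbs ≤ s

/-- Some computation path within work space `s` accepts `x`. -/
def NTM.AcceptsInSpace (M : NTM) (x : List Bool) (s : Nat) : Prop :=
  ∃ c : Cfg M.Q, Relation.ReflTransGen (M.StepB x s) M.init c ∧ c.q = M.accept

/-- Nondeterministic space classes `NSPACE(O(f))`. -/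
def NSPACEF (f : Nat → Nat) : Set (Set (List Bool)) :=
  {X | ∃ (M : NTM) (C : Nat), ∀ x, x ∈ X ↔ M.AcceptsInSpace x (C * (f x.length + 1))}

/-- NLOGSPACE = NSPACE(O(log n)). -/
def NLOGSPACE : Set (Set (List Bool)) := NSPACEF (Nat.log 2)

/-! ## Decision classes of the programming languages -/

def decideCFTR : Set (Set (List Bool)) := {X | ∃ p : Prog, CFTRProg p ∧ Decides p X}
def decideCF : Set (Set (List Bool)) := {X | ∃ p : Prog, CFProg p ∧ Decides p X}
def decideCFpoly : Set (Set (List Bool)) := {X | ∃ p : Prog, CFpolyProg p ∧ Decides p X}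
def decideNCF : Set (Set (List Bool)) := {X | ∃ p : Prog, NDecides p X}
def decideNCFTR : Set (Set (List Bool)) := {X | ∃ p : Prog, TRProg p ∧ NDecides p X}

/-! Cons-free programs cannot build new strings: the base functions return booleans or the tail
of their argument, so a value computed in an environment drawn from `V_x` stays in `V_x`. Every
environment in `T^{p,x}` is either the initial `[x]` or the argument list of a call evaluated in an
environment of `T^{p,x}`, hence lies in `V_x` as well. -/

theorem bool_mem_Vx (x : List Bool) (b : Bool) : Val.bool b ∈ Vx x :=
  Or.inl ⟨b, rfl⟩

theorem str_mem_Vx {x s : List Bool} (h : s <:+ x) : Val.str s ∈ Vx x :=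
  Or.inr ⟨s, rfl, h⟩

theorem evalBase_mem_Vx {x : List Bool} {op : BOp} {v w : Val} (hv : v ∈ Vx x)
    (h : evalBase op v = some w) : w ∈ Vx x := by
  match op, v, h with
  | .not, .bool _, rfl | .null, .str _, rfl | .head, .str (_ :: _), rfl => exact bool_mem_Vx x _
  | .tail, .str (b :: s), rfl =>
    obtain ⟨_, hb⟩ | ⟨t, ht, hsuf⟩ := hv
    · cases hb
    · cases ht
      exact str_mem_Vx ((List.suffix_cons b s).trans hsuf)

mutual
theorem EvalH.mem_Vx {p : Prog} {x : List Bool} {ρ : List Val} {e : Exp} {v : Val} {n : Nat}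
    {h : List (Nat × List Val)} (H : EvalH p ρ e v n h) (hρ : ∀ w ∈ ρ, w ∈ Vx x) :
    v ∈ Vx x :=
  match H with
  | .tt | .ff => bool_mem_Vx x _
  | .nil => str_mem_Vx (List.nil_suffix)
  | .var hi => hρ _ (List.mem_of_getElem? hi)
  | .base He hop => evalBase_mem_Vx (He.mem_Vx hρ) hop
  | .iteT _ H1 => H1.mem_Vx hρ
  | .iteF _ H2 => H2.mem_Vx hρ
  | .ambL H1 => H1.mem_Vx hρ
  | .ambR H2 => H2.mem_Vx hρ
  | .call _ Hargs _ Hbody => Hbody.mem_Vx (Hargs.mem_Vx hρ)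

theorem EvalArgsH.mem_Vx {p : Prog} {x : List Bool} {ρ : List Val} {es : List Exp}
    {ws : List Val} {m : Nat} {hs : List (Nat × List Val)} (H : EvalArgsH p ρ es ws m hs)
    (hρ : ∀ w ∈ ρ, w ∈ Vx x) : ∀ w ∈ ws, w ∈ Vx x :=
  match H with
  | .nil => fun _ hw => absurd hw List.not_mem_nil
  | .cons He Hes => List.forall_mem_cons.mpr ⟨He.mem_Vx hρ, Hes.mem_Vx hρ⟩
end

theorem Eval.mem_Vx {p : Prog} {x : List Bool} {ρ : List Val} {e : Exp} {v : Val}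
    (H : Eval p ρ e v) (hρ : ∀ w ∈ ρ, w ∈ Vx x) : v ∈ Vx x :=
  let ⟨_, _, H⟩ := H
  H.mem_Vx hρ

theorem EvalList.mem_Vx {p : Prog} {x : List Bool} {ρ : List Val} {es : List Exp}
    {ws : List Val} (H : EvalList p ρ es ws) (hρ : ∀ w ∈ ρ, w ∈ Vx x) : ∀ w ∈ ws, w ∈ Vx x := by
  induction H with
  | nil => exact fun _ hw => absurd hw List.not_mem_nil
  | cons He _ ih => exact List.forall_mem_cons.mpr ⟨He.mem_Vx hρ, ih⟩

theorem Occurs.eval {p : Prog} {x : List Bool} {ρ : List Val} {e : Exp} {v : Val}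
    (H : Occurs p x ρ e v) : Eval p ρ e v := by
  cases H <;> assumption

theorem Occurs.env_mem_Vx {p : Prog} {x : List Bool} {ρ : List Val} {e : Exp} {v : Val}
    (H : Occurs p x ρ e v) : ∀ w ∈ ρ, w ∈ Vx x := by
  induction H with
  | root => exact List.forall_mem_singleton.mpr (str_mem_Vx List.suffix_rfl)
  | body _ _ Hargs _ ih => exact Hargs.mem_Vx ih
  | _ => assumption

/-- the suffix property.  Every judgment `p, ρ ⊢ e → v` occurring in the
computation tree `T^{p,x}` of a CF program `p` on input `x` satisfies `v ∈ V_x` and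
`ρ(z) ∈ V_x` for every variable `z` bound by `ρ`, where `V_x = {0,1} ∪ suffixes(x)`. -/
theorem suffix_property (p : Prog) (hp : CFProg p) (x : List Bool)
    (ρ : List Val) (e : Exp) (v : Val) (hocc : Occurs p x ρ e v) :
    v ∈ Vx x ∧ ∀ w ∈ ρ, w ∈ Vx x :=
  ⟨hocc.eval.mem_Vx hocc.env_mem_Vx, hocc.env_mem_Vx⟩
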